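/- In a memory-augmented HMM with N memory cells, let g(x) = 1(b^T P(M_{j*} | X_{1:T} = x) ≥ 0) for b ∈ ℝ^{|𝕄|} and j* ∈ [N]. Assume stationarity of P(H_0) and the relaxed multi-memory non-degeneracy condition with recoverable states H* = {j*} × S*. Let R = {x ∈ X^T : P(X_{1:T} = x) > 0 and there exists i ∈ [T] with supp(P(H_i | X_{−i} = x_{−i})) ⊆ H*}. Then, with the prompt π defined by π_{(m_{1:N},j,s)} = 1 if m_{j*} ∈ supp(b) and 0 otherwise (inducing the modified sequence X̂ of length T+1 and x̂ = (z̃, x)), there exist attention-head parameters — a key matrix Θ^{(K)} ∈ ℝ^{(|H|+1)×|X|}, a query q ∈ ℝ^{|H|+1}, position embeddings β_1, …, β_{T+1} ∈ ℝ^{|H|+1}, value parameters Θ^{(V)} ∈ ℝ^{|𝕄||H|×|X|} and u ∈ ℝ^{|𝕄||H|} — such that for all x ∈ R: g(x) = 1( (1/|I|) Σ_{i ∈ I} u^T ((Θ^{(V)} Ĝ_i(x)) ⊙ ē_i(x)) ≥ 0 ), where Ĝ_i(x) = W v_i(x) with (v_i(x))_{(m,j,s)} = P(M_j = m, H_i =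 (j,s) | X̂_{−i} = x̂_{−i}) (and Ĝ_i(x) = 0 when P(X̂_{−i} = x̂_{−i}) = 0), ē_i(x) ∈ ℝ^{|𝕄||H|} is the value embedding at position i given by ē_i(x)_{(m,j,s)} = W_{x_{i−1},(m,j,s)} for i > 1 and ē_1(x)_{(m,j,s)} = (1/|𝕄|^{N−1}) Σ_{m'_{1:N} : m'_j = m} π_{(m'_{1:N},j,s)}, and I = argmax_{i ∈ [T+1]} { q^T (Θ^{(K)} Ĝ_i(x) + β_i) }. -/

import Mathlib

/-!
The prompt token `z̃` is emitted only when `b (m j*) ≠ 0`, and since `P(H_0)` is stationary it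
does not shift the hidden chain: position `i + 1` of `x̂` sees the posterior of position `i` of
`x`, reweighted by `𝟙(b (M j*) ≠ 0)`.

Non-degeneracy gives linear functionals `ψ_p`, one for each recoverable column
`p = (m, (j*, s))` (`b m ≠ 0`, `s ∈ S*`), that read the coefficient of `p` off any mixture of
emission columns not charging the columns `(m, (j*, s))` with `b m = 0`; after the prompt no
posterior charges them. The key `∑_p ψ_p (Ĝ_i)` is then the posterior mass of the recoverable
columns: it is at most `1`, with equality exactly where the posterior lives on `H*`, and the
prompt position is pushed below everything. As `x ∈ R`, the value `1` is attained, and at every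
maximiser the value head returns `P(X = x) E[b (M j*) | X = x] / P(X̂_{-i} = x̂_{-i})`, a positive
multiple of `bᵀ P(M_{j*} | X = x)`. If that normaliser vanishes at the position given by `R`,
then `P(X̂ = x̂) = 0`, and both sides are `0`.
-/

open scoped Classical
open Matrix

noncomputable section

/-- Forward pass for a Markov chain with transition matrix `A`. -/
def fwdVec {H : Type*} [Fintype H] (A : Matrix H H ℝ) :
    (H → ℝ) → List (H → ℝ) → (H → ℝ)
  | μ, [] => μ
  | μ, v :: vs => fwdVec A (A.mulVec fun h => μ h * v h) vs

/-- `mJointAt A μ W m x i g = P(H_i = g, X_{−i} = x_{−i} | M = m)` in a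
memory-augmented HMM (hidden chain `H_1, …, H_T`, `P(H_1) = A μ`). -/
def mJointAt {𝕄 S X : Type*} {N T : ℕ} [Fintype S] [DecidableEq S]
    (A : Matrix (Fin N × S) (Fin N × S) ℝ) (μ : Fin N × S → ℝ)
    (W : X → 𝕄 → Fin N × S → ℝ) (m : Fin N → 𝕄)
    (x : Fin T → X) (i : Fin T) (g : Fin N × S) : ℝ :=
  ∑ h, fwdVec A (A.mulVec μ)
    (List.ofFn fun k : Fin T =>
      if k = i then (fun g' => if g' = g then 1 else 0)
      else fun g' => W (x k) (m g'.1) g') h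

/-- `mZ … x i = P(X_{−i} = x_{−i})`. -/
def mZ {𝕄 S X : Type*} {N T : ℕ} [Fintype 𝕄] [Fintype S] [DecidableEq S]
    (pM : (Fin N → 𝕄) → ℝ) (A : Matrix (Fin N × S) (Fin N × S) ℝ)
    (μ : Fin N × S → ℝ) (W : X → 𝕄 → Fin N × S → ℝ)
    (x : Fin T → X) (i : Fin T) : ℝ :=
  ∑ m, pM m * ∑ g, mJointAt A μ W m x i g

/-- `mSeqPm … m x = P(X_{1:T} = x | M = m)`. -/
def mSeqPm {𝕄 S X : Type*} {N T : ℕ} [Fintype S]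
    (A : Matrix (Fin N × S) (Fin N × S) ℝ) (μ : Fin N × S → ℝ)
    (W : X → 𝕄 → Fin N × S → ℝ) (m : Fin N → 𝕄) (x : Fin T → X) : ℝ :=
  ∑ h, fwdVec A (A.mulVec μ)
    (List.ofFn fun k : Fin T => fun g' => W (x k) (m g'.1) g') h

/-- `mSeqP … x = P(X_{1:T} = x)`. -/
def mSeqP {𝕄 S X : Type*} {N T : ℕ} [Fintype 𝕄] [Fintype S]
    (pM : (Fin N → 𝕄) → ℝ) (A : Matrix (Fin N × S) (Fin N × S) ℝ)
    (μ : Fin N × S → ℝ) (W : X → 𝕄 → Fin N × S → ℝ) (x : Fin T → X) : ℝ :=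
  ∑ m, pM m * mSeqPm A μ W m x

/-- `mGtok … x i z = P(X_i = z | X_{−i} = x_{−i})`, the pretrained model
output `G_i(x)` at position `i`. -/
def mGtok {𝕄 S X : Type*} {N T : ℕ} [Fintype 𝕄] [Fintype S] [DecidableEq S]
    (pM : (Fin N → 𝕄) → ℝ) (A : Matrix (Fin N × S) (Fin N × S) ℝ)
    (μ : Fin N × S → ℝ) (W : X → 𝕄 → Fin N × S → ℝ)
    (x : Fin T → X) (i : Fin T) (z : X) : ℝ :=
  (∑ m, pM m * ∑ g, mJointAt A μ W m x i g * W z (m g.1) g) / mZ pM A μ W x i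

/-- `mPostH … x i g = P(H_i = g | X_{−i} = x_{−i})`. -/
def mPostH {𝕄 S X : Type*} {N T : ℕ} [Fintype 𝕄] [Fintype S] [DecidableEq S]
    (pM : (Fin N → 𝕄) → ℝ) (A : Matrix (Fin N × S) (Fin N × S) ℝ)
    (μ : Fin N × S → ℝ) (W : X → 𝕄 → Fin N × S → ℝ)
    (x : Fin T → X) (i : Fin T) (g : Fin N × S) : ℝ :=
  (∑ m, pM m * mJointAt A μ W m x i g) / mZ pM A μ W x i

/-- The 0/1 prompt of the paper: `π_{(m_{1:N},j,s)} = 1` if `m_{j*} ∈ supp(b)`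
and `0` otherwise (it does not depend on `(j,s)`). -/
def promptV {𝕄 : Type*} {N : ℕ} (b : 𝕄 → ℝ) (jstar : Fin N)
    (m : Fin N → 𝕄) : ℝ :=
  if b (m jstar) ≠ 0 then 1 else 0

/-- Conditioned on `M = m`, the emission-likelihood vector at position `k`
(0-indexed) of the modified sequence `x̂ = (z̃, x_1, …, x_T)`:
at position `0` the fake token `z̃` has likelihood `π_{(m,j,s)}`, and at
position `k ≥ 1` the token `x_k` has likelihood `W (x_k) (m j) (j,s)`. -/
def hatEm {𝕄 S X : Type*} {N T : ℕ} (W : X → 𝕄 → Fin N × S → ℝ)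
    (b : 𝕄 → ℝ) (jstar : Fin N) (m : Fin N → 𝕄) (x : Fin T → X)
    (k : Fin (T + 1)) : Fin N × S → ℝ :=
  if hk : (k : ℕ) = 0 then fun _ => promptV b jstar m
  else fun g => W (x ⟨(k : ℕ) - 1, by have := k.isLt; omega⟩) (m g.1) g

/-- `hatJointAt … m x i g = P(H_i = g, X̂_{−i} = x̂_{−i} | M = m)` for the
modified sequence `X̂` of length `T+1` (hidden chain `H_1, …, H_{T+1}`,
`P(H_1) = A μ`). -/
def hatJointAt {𝕄 S X : Type*} {N T : ℕ} [Fintype S] [DecidableEq S]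
    (A : Matrix (Fin N × S) (Fin N × S) ℝ) (μ : Fin N × S → ℝ)
    (W : X → 𝕄 → Fin N × S → ℝ) (b : 𝕄 → ℝ) (jstar : Fin N)
    (m : Fin N → 𝕄) (x : Fin T → X) (i : Fin (T + 1)) (g : Fin N × S) : ℝ :=
  ∑ h, fwdVec A (A.mulVec μ)
    (List.ofFn fun k : Fin (T + 1) =>
      if k = i then (fun g' => if g' = g then 1 else 0)
      else hatEm W b jstar m x k) h

/-- `hatZ … x i = P(X̂_{−i} = x̂_{−i})`. -/
def hatZ {𝕄 S X : Type*} {N T : ℕ} [Fintype 𝕄] [Fintype S] [DecidableEq S]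
    (pM : (Fin N → 𝕄) → ℝ) (A : Matrix (Fin N × S) (Fin N × S) ℝ)
    (μ : Fin N × S → ℝ) (W : X → 𝕄 → Fin N × S → ℝ) (b : 𝕄 → ℝ)
    (jstar : Fin N) (x : Fin T → X) (i : Fin (T + 1)) : ℝ :=
  ∑ m, pM m * ∑ g, hatJointAt A μ W b jstar m x i g

/-- `hatSeqPm … m x = P(X̂ = x̂ | M = m)`. -/
def hatSeqPm {𝕄 S X : Type*} {N T : ℕ} [Fintype S]
    (A : Matrix (Fin N × S) (Fin N × S) ℝ) (μ : Fin N × S → ℝ)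
    (W : X → 𝕄 → Fin N × S → ℝ) (b : 𝕄 → ℝ) (jstar : Fin N)
    (m : Fin N → 𝕄) (x : Fin T → X) : ℝ :=
  ∑ h, fwdVec A (A.mulVec μ) (List.ofFn (hatEm W b jstar m x)) h

/-- `hatSeqP … x = P(X̂ = x̂)`. -/
def hatSeqP {𝕄 S X : Type*} {N T : ℕ} [Fintype 𝕄] [Fintype S]
    (pM : (Fin N → 𝕄) → ℝ) (A : Matrix (Fin N × S) (Fin N × S) ℝ)
    (μ : Fin N × S → ℝ) (W : X → 𝕄 → Fin N × S → ℝ) (b : 𝕄 → ℝ)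
    (jstar : Fin N) (x : Fin T → X) : ℝ :=
  ∑ m, pM m * hatSeqPm A μ W b jstar m x

/-- `hatGvec … x i z = (W v_i(x)) z` where
`(v_i(x))_{(m,j,s)} = P(M_j = m, H_i = (j,s) | X̂_{−i} = x̂_{−i})`:
the model output `Ĝ_i(x)` on the prompted input. -/
def hatGvec {𝕄 S X : Type*} {N T : ℕ} [Fintype 𝕄] [Fintype S] [Fintype X]
    [DecidableEq 𝕄] [DecidableEq S]
    (pM : (Fin N → 𝕄) → ℝ) (A : Matrix (Fin N × S) (Fin N × S) ℝ)
    (μ : Fin N × S → ℝ) (W : X → 𝕄 → Fin N × S → ℝ) (b : 𝕄 → ℝ)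
    (jstar : Fin N) (x : Fin T → X) (i : Fin (T + 1)) (z : X) : ℝ :=
  ∑ p : 𝕄 × (Fin N × S), W z p.1 p.2 *
    ((∑ m, if m p.2.1 = p.1 then pM m * hatJointAt A μ W b jstar m x i p.2 else 0)
      / hatZ pM A μ W b jstar x i)

/-- `hatGtot` is `Ĝ_i(x)` with the convention `Ĝ_i(x) = 0` when
`P(X̂_{−i} = x̂_{−i}) = 0`. -/
def hatGtot {𝕄 S X : Type*} {N T : ℕ} [Fintype 𝕄] [Fintype S] [Fintype X]
    [DecidableEq 𝕄] [DecidableEq S]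
    (pM : (Fin N → 𝕄) → ℝ) (A : Matrix (Fin N × S) (Fin N × S) ℝ)
    (μ : Fin N × S → ℝ) (W : X → 𝕄 → Fin N × S → ℝ) (b : 𝕄 → ℝ)
    (jstar : Fin N) (x : Fin T → X) (i : Fin (T + 1)) (z : X) : ℝ :=
  if 0 < hatZ pM A μ W b jstar x i then hatGvec pM A μ W b jstar x i z else 0

/-- The value-embedding sequence:
`ē_1(x)_{(m,j,s)} = (1/|𝕄|^{N−1}) ∑_{m' : m'_j = m} π_{(m',j,s)}` (with `π`
the 0/1 prompt), and `ē_i(x)_{(m,j,s)} = W_{x_{i−1},(m,j,s)}` for `i > 1`. -/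
def mEvec {𝕄 S X : Type*} {N T : ℕ} [Fintype 𝕄]
    (W : X → 𝕄 → Fin N × S → ℝ) (b : 𝕄 → ℝ) (jstar : Fin N)
    (x : Fin T → X) (i : Fin (T + 1)) : 𝕄 × (Fin N × S) → ℝ :=
  if hk : (i : ℕ) = 0 then
    fun p => ((Fintype.card 𝕄 : ℝ) ^ (N - 1))⁻¹ *
      ∑ m' : Fin N → 𝕄, if m' p.2.1 = p.1 then promptV b jstar m' else 0
  else fun p => W (x ⟨(i : ℕ) - 1, by have := i.isLt; omega⟩) p.1 p.2

/-- `mMemPost … x m0 = P(M_{j*} = m0 | X_{1:T} = x)`. -/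
def mMemPost {𝕄 S X : Type*} {N T : ℕ} [Fintype 𝕄] [Fintype S] [DecidableEq 𝕄]
    (pM : (Fin N → 𝕄) → ℝ) (A : Matrix (Fin N × S) (Fin N × S) ℝ)
    (μ : Fin N × S → ℝ) (W : X → 𝕄 → Fin N × S → ℝ) (jstar : Fin N)
    (x : Fin T → X) (m0 : 𝕄) : ℝ :=
  (∑ m, if m jstar = m0 then pM m * mSeqPm A μ W m x else 0) / mSeqP pM A μ W x

section RealLemmas

variable {α : Type*} [Fintype α] {f : α → ℝ}

theorem eq_zero_of_div_sum_eq_zero (hf : ∀ a, 0 ≤ f a) {a : α} (h : f a / ∑ a', f a' = 0) :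
    f a = 0 := by
  rcases div_eq_zero_iff.1 h with h | h
  · exact h
  · exact (Finset.sum_eq_zero_iff_of_nonneg fun a _ => hf a).1 h a (Finset.mem_univ a)

theorem div_sum_le_one (hf : ∀ a, 0 ≤ f a) (a : α) : f a / ∑ a', f a' ≤ 1 :=
  div_le_one_of_le₀ (Finset.single_le_sum (fun a _ => hf a) (Finset.mem_univ a))
    (Finset.sum_nonneg fun a _ => hf a)

variable (P : α → Prop) [DecidablePred P]

theorem sum_ite_div_sum_nonneg (hf : ∀ a, 0 ≤ f a) :
    0 ≤ (∑ a, if P a then f a else 0) / ∑ a, f a :=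
  div_nonneg (Finset.sum_nonneg fun a _ => by split_ifs <;> simp [hf a])
    (Finset.sum_nonneg fun a _ => hf a)

theorem sum_ite_div_sum_le_one (hf : ∀ a, 0 ≤ f a) :
    (∑ a, if P a then f a else 0) / ∑ a, f a ≤ 1 :=
  div_le_one_of_le₀ (Finset.sum_le_sum fun a _ => by split_ifs <;> simp [hf a])
    (Finset.sum_nonneg fun a _ => hf a)

theorem sum_ite_div_sum_eq_one (hP : ∀ a, ¬ P a → f a = 0) (hpos : 0 < ∑ a, f a) :
    (∑ a, if P a then f a else 0) / ∑ a, f a = 1 := by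
  rw [div_eq_one_iff_eq hpos.ne']
  exact Finset.sum_congr rfl fun a _ => by split_ifs with h <;> simp [hP, h]

theorem eq_zero_of_one_le_sum_ite_div_sum (hf : ∀ a, 0 ≤ f a)
    (h : 1 ≤ (∑ a, if P a then f a else 0) / ∑ a, f a) {a : α} (ha : ¬ P a) : f a = 0 := by
  have hle : ∀ a ∈ Finset.univ, (if P a then f a else 0) ≤ f a := fun a _ => by
    split_ifs <;> simp [hf a]
  have hpos : 0 < ∑ a, f a := by
    by_contra hZ
    rw [le_antisymm (not_lt.1 hZ) (Finset.sum_nonneg fun a _ => hf a), div_zero] at h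
    exact absurd h (by norm_num)
  have heq := (Finset.sum_eq_sum_iff_of_le hle).1
    (le_antisymm (Finset.sum_le_sum hle) ((one_le_div hpos).1 h)) a (Finset.mem_univ a)
  rwa [if_neg ha, eq_comm] at heq

end RealLemmas

theorem nonneg_div_iff_nonneg_average {ι : Type*} (I : Finset ι) {D Z : ℝ} (hZ : 0 < Z)
    (z val : ι → ℝ) (hz : ∀ i ∈ I, 0 ≤ z i) (hval : ∀ i ∈ I, val i = D / z i)
    (hpos : D ≠ 0 → ∃ i ∈ I, 0 < z i) :
    0 ≤ D / Z ↔ 0 ≤ (I.card : ℝ)⁻¹ * ∑ i ∈ I, val i := by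
  have hsum :
      (I.card : ℝ)⁻¹ * ∑ i ∈ I, val i = D * ((I.card : ℝ)⁻¹ * ∑ i ∈ I, (z i)⁻¹) := by
    rw [Finset.sum_congr rfl hval]
    simp only [div_eq_mul_inv, ← Finset.mul_sum]
    ring
  rw [hsum, le_div_iff₀ hZ, zero_mul]
  by_cases hD : D = 0
  · simp [hD]
  obtain ⟨i, hi, hzi⟩ := hpos hD
  have hc : 0 < (I.card : ℝ)⁻¹ * ∑ i ∈ I, (z i)⁻¹ :=
    mul_pos (inv_pos.2 (by exact_mod_cast Finset.card_pos.2 ⟨i, hi⟩))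
      (Finset.sum_pos' (fun i hi => inv_nonneg.2 (hz i hi)) ⟨i, hi, inv_pos.2 hzi⟩)
  exact (mul_nonneg_iff_of_pos_right hc).symm

theorem apply_sum_smul_le_sum_abs {ι E : Type*} [Fintype ι] [AddCommGroup E] [Module ℝ E]
    (L : Module.Dual ℝ E) (w : ι → ℝ) (c : ι → E) (hw0 : ∀ i, 0 ≤ w i) (hw1 : ∀ i, w i ≤ 1) :
    L (∑ i, w i • c i) ≤ ∑ i, |L (c i)| := by
  rw [map_sum]
  refine Finset.sum_le_sum fun i _ => ?_
  rw [map_smul, smul_eq_mul]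
  calc w i * L (c i) ≤ w i * |L (c i)| := mul_le_mul_of_nonneg_left (le_abs_self _) (hw0 i)
    _ ≤ |L (c i)| := mul_le_of_le_one_left (abs_nonneg _) (hw1 i)

theorem sum_prod_mul_sum_ite_eq {Ω α G R : Type*} [Fintype Ω] [Fintype α] [Fintype G]
    [DecidableEq α] [CommSemiring R] (key : Ω → G → α) (F : α → G → R) (w : Ω → G → R) :
    ∑ p : α × G, F p.1 p.2 * ∑ ω, (if key ω p.2 = p.1 then w ω p.2 else 0)
      = ∑ ω, ∑ g, F (key ω g) g * w ω g := by
  simp only [Fintype.sum_prod_type, Finset.mul_sum, mul_ite, mul_zero]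
  rw [Finset.sum_comm]
  refine (Finset.sum_congr rfl fun g _ => Finset.sum_comm).trans ?_
  simp only [Finset.sum_ite_eq, Finset.mem_univ, if_true]
  exact Finset.sum_comm

theorem exists_dual_of_linearIndependent {K V ι : Type*} [Field K] [AddCommGroup V] [Module K V]
    [DecidableEq ι] {c : ι → V} (hc : LinearIndependent K c) {U : Submodule K V}
    (hU : Submodule.span K (Set.range c) ⊓ U = ⊥) :
    ∃ ψ : ι → Module.Dual K V,
      (∀ i j, ψ i (c j) = if j = i then 1 else 0) ∧ ∀ i, ∀ u ∈ U, ψ i u = 0 := by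
  have hcQ : LinearIndependent K (U.mkQ ∘ c) := hc.map (by rwa [U.ker_mkQ, disjoint_iff])
  choose g hg using fun i => LinearMap.exists_extend ((Module.Basis.span hcQ).coord i)
  refine ⟨fun i => g i ∘ₗ U.mkQ, fun i j => ?_, fun i u hu => ?_⟩
  · calc g i (U.mkQ (c j)) = (Module.Basis.span hcQ).coord i (Module.Basis.span hcQ j) := by
          rw [← LinearMap.congr_fun (hg i), LinearMap.comp_apply, Submodule.subtype_apply,
            Module.Basis.span_apply]
          rfl
      _ = _ := by rw [Module.Basis.coord_apply, Module.Basis.repr_self, Finsupp.single_apply]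
  · simp [(Submodule.Quotient.mk_eq_zero U).2 hu]

section ForwardAlgorithm

variable {H : Type*} [Fintype H] (A : Matrix H H ℝ)

theorem fwdVec_cons (μ e : H → ℝ) (l : List (H → ℝ)) :
    fwdVec A μ (e :: l) = fwdVec A (A *ᵥ (μ * e)) l := rfl

theorem fwdVec_add (μ ν : H → ℝ) (l : List (H → ℝ)) :
    fwdVec A (μ + ν) l = fwdVec A μ l + fwdVec A ν l := by
  induction l generalizing μ ν with
  | nil => rfl
  | cons e l ih => simp only [fwdVec_cons, add_mul, mulVec_add, ih]

theorem fwdVec_smul (c : ℝ) (μ : H → ℝ) (l : List (H → ℝ)) :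
    fwdVec A (c • μ) l = c • fwdVec A μ l := by
  induction l generalizing μ with
  | nil => rfl
  | cons e l ih => simp only [fwdVec_cons, smul_mul_assoc, mulVec_smul, ih]

def fwdLinear (l : List (H → ℝ)) : (H → ℝ) →ₗ[ℝ] (H → ℝ) where
  toFun μ := fwdVec A μ l
  map_add' μ ν := fwdVec_add A μ ν l
  map_smul' c μ := fwdVec_smul A c μ l

theorem fwdVec_nonneg (hA : ∀ g g', 0 ≤ A g' g) {μ : H → ℝ} (hμ : 0 ≤ μ)
    {l : List (H → ℝ)} (hl : ∀ e ∈ l, 0 ≤ e) : 0 ≤ fwdVec A μ l := by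
  induction l generalizing μ with
  | nil => exact hμ
  | cons e l ih =>
    refine ih (fun h => Finset.sum_nonneg fun g _ => ?_) fun e' he' => hl e' (.tail _ he')
    exact mul_nonneg (hA _ _) (mul_nonneg (hμ g) (hl e (.head _) g))

theorem fwdVec_const_cons {μ : H → ℝ} (hstat : A *ᵥ μ = μ) (c : ℝ)
    (l : List (H → ℝ)) :
    fwdVec A μ ((fun _ => c) :: l) = c • fwdVec A μ l := by
  have hμc : (μ * fun _ => c) = c • μ := by ext; simp [mul_comm]
  rw [fwdVec_cons, hμc, mulVec_smul, hstat, fwdVec_smul]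

variable [DecidableEq H]

theorem fwdVec_set (μ : H → ℝ) (l : List (H → ℝ)) {i : ℕ} (hi : i < l.length)
    (v : H → ℝ) :
    fwdVec A μ (l.set i v)
      = ∑ g, v g • fwdVec A μ (l.set i fun g' => if g' = g then 1 else 0) := by
  induction l generalizing i μ with
  | nil => exact absurd hi (Nat.not_lt_zero _)
  | cons e l ih =>
    cases i with
    | zero =>
      have hv : μ * v = ∑ g, v g • (μ * fun g' => if g' = g then 1 else 0) := by
        ext h; simp [Finset.sum_apply, mul_comm]
      simp only [List.set_cons_zero, fwdVec_cons, hv, mulVec_sum, mulVec_smul]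
      exact map_sum (fwdLinear A l) _ _ |>.trans (by simp [fwdLinear])
    | succ i => simpa only [List.set_cons_succ, fwdVec_cons] using ih _ (by simpa using hi)

theorem sum_mul_sum_fwdVec_set (μ : H → ℝ) (l : List (H → ℝ)) {i : ℕ}
    (hi : i < l.length) :
    ∑ g, l[i] g * ∑ h, fwdVec A μ (l.set i fun g' => if g' = g then 1 else 0) h
      = ∑ h, fwdVec A μ l h := by
  conv_rhs => rw [← List.set_getElem_self hi, fwdVec_set A μ l hi]
  simp only [Finset.sum_apply, Pi.smul_apply, smul_eq_mul, Finset.mul_sum]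
  exact Finset.sum_comm

theorem List.ofFn_ite_eq_set {α : Type*} {n : ℕ} (e : Fin n → α) (i : Fin n) (v : α) :
    List.ofFn (fun k => if k = i then v else e k) = (List.ofFn e).set i v := by
  refine List.ext_getElem (by simp) fun k h₁ h₂ => ?_
  simp [List.getElem_set, Fin.ext_iff, eq_comm]

theorem sum_mul_sum_fwdVec_ofFn {n : ℕ} (μ : H → ℝ) (e : Fin n → H → ℝ) (i : Fin n) :
    ∑ g, e i g * ∑ h, fwdVec A μ
        (List.ofFn fun k => if k = i then (fun g' => if g' = g then 1 else 0) else e k) h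
      = ∑ h, fwdVec A μ (List.ofFn e) h := by
  simp only [List.ofFn_ite_eq_set]
  simpa using sum_mul_sum_fwdVec_set A μ (List.ofFn e) (i := i) (by simp)

end ForwardAlgorithm

structure IsNonnegHMM {𝕄 S X : Type*} {N : ℕ} (pM : (Fin N → 𝕄) → ℝ)
    (A : Matrix (Fin N × S) (Fin N × S) ℝ) (μ : Fin N × S → ℝ) (W : X → 𝕄 → Fin N × S → ℝ) :
    Prop where
  pM_nonneg : ∀ m, 0 ≤ pM m
  A_nonneg : ∀ g g', 0 ≤ A g' g
  μ_nonneg : ∀ g, 0 ≤ μ g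
  W_nonneg : ∀ z m0 g, 0 ≤ W z m0 g

section PromptedHMM

variable {𝕄 S X : Type*} {N T : ℕ} {W : X → 𝕄 → Fin N × S → ℝ} (b : 𝕄 → ℝ)
  (jstar : Fin N)

theorem promptV_nonneg (m : Fin N → 𝕄) : 0 ≤ promptV b jstar m := by
  unfold promptV; split_ifs <;> norm_num

theorem promptV_eq_zero {m : Fin N → 𝕄} (hm : b (m jstar) = 0) : promptV b jstar m = 0 :=
  if_neg (not_not.2 hm)

theorem mul_promptV (m : Fin N → 𝕄) : b (m jstar) * promptV b jstar m = b (m jstar) := by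
  by_cases hm : b (m jstar) = 0
  · rw [hm, zero_mul]
  · rw [promptV, if_pos hm, mul_one]

theorem hatEm_zero (m : Fin N → 𝕄) (x : Fin T → X) :
    hatEm W b jstar m x 0 = fun _ => promptV b jstar m := rfl

theorem hatEm_succ (m : Fin N → 𝕄) (x : Fin T → X) (k : Fin T) :
    hatEm W b jstar m x k.succ = fun g => W (x k) (m g.1) g := by
  simp [hatEm]

theorem hatEm_nonneg (hW0 : ∀ z m0 g, 0 ≤ W z m0 g) (m : Fin N → 𝕄) (x : Fin T → X)
    (k : Fin (T + 1)) (g : Fin N × S) : 0 ≤ hatEm W b jstar m x k g := by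
  unfold hatEm
  split_ifs
  exacts [promptV_nonneg b jstar m, hW0 _ _ _]

theorem mEvec_succ [Fintype 𝕄] (x : Fin T → X) (j : Fin T) (p : 𝕄 × (Fin N × S)) :
    mEvec W b jstar x j.succ p = W (x j) p.1 p.2 := by
  simp [mEvec]

variable [Fintype S] {A : Matrix (Fin N × S) (Fin N × S) ℝ} {μ : Fin N × S → ℝ}

theorem hatSeqPm_eq (hstat : A *ᵥ μ = μ) (m : Fin N → 𝕄) (x : Fin T → X) :
    hatSeqPm A μ W b jstar m x = promptV b jstar m * mSeqPm A μ W m x := by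
  simp only [hatSeqPm, mSeqPm, hstat, List.ofFn_succ, hatEm_zero, hatEm_succ,
    fwdVec_const_cons A hstat, Pi.smul_apply, smul_eq_mul, Finset.mul_sum]

variable [DecidableEq S]

theorem hatJointAt_succ (hstat : A *ᵥ μ = μ) (m : Fin N → 𝕄) (x : Fin T → X) (j : Fin T)
    (g : Fin N × S) :
    hatJointAt A μ W b jstar m x j.succ g = promptV b jstar m * mJointAt A μ W m x j g := by
  simp only [hatJointAt, mJointAt, hstat, List.ofFn_succ, (Fin.succ_ne_zero j).symm, if_false,
    hatEm_zero, hatEm_succ, Fin.succ_inj, fwdVec_const_cons A hstat, Pi.smul_apply, smul_eq_mul,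
    Finset.mul_sum]

theorem sum_hatEm_mul_hatJointAt (m : Fin N → 𝕄) (x : Fin T → X) (i : Fin (T + 1)) :
    ∑ g, hatEm W b jstar m x i g * hatJointAt A μ W b jstar m x i g
      = hatSeqPm A μ W b jstar m x :=
  sum_mul_sum_fwdVec_ofFn A _ _ i

theorem mJointAt_nonneg (hA0 : ∀ g g', 0 ≤ A g' g) (hμ0 : ∀ g, 0 ≤ μ g)
    (hW0 : ∀ z m0 g, 0 ≤ W z m0 g) (m : Fin N → 𝕄) (x : Fin T → X) (i : Fin T)
    (g : Fin N × S) :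
    0 ≤ mJointAt A μ W m x i g := by
  refine Finset.sum_nonneg fun h _ => fwdVec_nonneg A hA0 ?_ ?_ h
  · exact fun h => Finset.sum_nonneg fun g _ => mul_nonneg (hA0 _ _) (hμ0 g)
  · simp only [List.mem_ofFn, forall_exists_index, forall_apply_eq_imp_iff]
    intro k g'
    split_ifs
    · dsimp only; split_ifs <;> norm_num
    · exact hW0 _ _ _

theorem hatJointAt_nonneg (hA0 : ∀ g g', 0 ≤ A g' g) (hμ0 : ∀ g, 0 ≤ μ g)
    (hW0 : ∀ z m0 g, 0 ≤ W z m0 g) (m : Fin N → 𝕄) (x : Fin T → X) (i : Fin (T + 1))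
    (g : Fin N × S) :
    0 ≤ hatJointAt A μ W b jstar m x i g := by
  refine Finset.sum_nonneg fun h _ => fwdVec_nonneg A hA0 ?_ ?_ h
  · exact fun h => Finset.sum_nonneg fun g _ => mul_nonneg (hA0 _ _) (hμ0 g)
  · simp only [List.mem_ofFn, forall_exists_index, forall_apply_eq_imp_iff]
    intro k g'
    split_ifs
    · dsimp only; split_ifs <;> norm_num
    · exact hatEm_nonneg b jstar hW0 m x k g'

theorem mul_hatEm_mul_hatJointAt_eq_zero {pM : (Fin N → 𝕄) → ℝ} (h : IsNonnegHMM pM A μ W)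
    (x : Fin T → X) {m : Fin N → 𝕄} (hseq : pM m * hatSeqPm A μ W b jstar m x = 0) (i : Fin (T + 1))
    (g : Fin N × S) :
    pM m * (hatEm W b jstar m x i g * hatJointAt A μ W b jstar m x i g) = 0 := by
  rw [← sum_hatEm_mul_hatJointAt b jstar m x i, Finset.mul_sum] at hseq
  exact (Finset.sum_eq_zero_iff_of_nonneg fun g _ => mul_nonneg (h.pM_nonneg m)
    (mul_nonneg (hatEm_nonneg b jstar h.W_nonneg m x i g)
      (hatJointAt_nonneg b jstar h.A_nonneg h.μ_nonneg h.W_nonneg m x i g))).1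
    hseq g (Finset.mem_univ g)

end PromptedHMM

section Recovery

variable {𝕄 S X : Type*} {N : ℕ} [Fintype 𝕄] [Fintype S]

def emissionCol (W : X → 𝕄 → Fin N × S → ℝ) (p : 𝕄 × (Fin N × S)) : X → ℝ :=
  fun z => W z p.1 p.2

def IsRecoverable (b : 𝕄 → ℝ) (jstar : Fin N) (Sstar : Finset S) (p : 𝕄 × (Fin N × S)) :
    Prop :=
  b p.1 ≠ 0 ∧ p.2.1 = jstar ∧ p.2.2 ∈ Sstar

/-- Non-degeneracy says nothing about the columns `(m, (j*, s))` with `b m = 0`, hence the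
restriction on `v`; once the prompt is prepended, the posterior never charges them. -/
def IsRecoveryFamily (W : X → 𝕄 → Fin N × S → ℝ) (b : 𝕄 → ℝ) (jstar : Fin N)
    (Sstar : Finset S) (ψ : 𝕄 × (Fin N × S) → Module.Dual ℝ (X → ℝ)) : Prop :=
  ∀ v : 𝕄 × (Fin N × S) → ℝ, (∀ p, p.2.1 = jstar → b p.1 = 0 → v p = 0) → ∀ p,
    ψ p (∑ p', v p' • emissionCol W p') = if IsRecoverable b jstar Sstar p then v p else 0

theorem exists_recoveryFunctionals (W : X → 𝕄 → Fin N × S → ℝ) (b : 𝕄 → ℝ)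
    (jstar : Fin N) (Sstar : Finset S)
    (hli : LinearIndependent ℝ
      (fun p : {m0 : 𝕄 // b m0 ≠ 0} × {s : S // s ∈ Sstar} =>
        fun z : X => W z p.1.1 (jstar, p.2.1)))
    (hspan : Submodule.span ℝ
        {f : X → ℝ | ∃ m0 : 𝕄, ∃ s : S,
          b m0 ≠ 0 ∧ s ∈ Sstar ∧ f = fun z => W z m0 (jstar, s)}
      ⊓ Submodule.span ℝ
        {f : X → ℝ |
          (∃ m0 : 𝕄, ∃ s : S,
            b m0 ≠ 0 ∧ s ∉ Sstar ∧ f = fun z => W z m0 (jstar, s))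
          ∨ (∃ m0 : 𝕄, ∃ j : Fin N, ∃ s : S,
            j ≠ jstar ∧ f = fun z => W z m0 (j, s))}
      = ⊥) :
    ∃ ψ, IsRecoveryFamily W b jstar Sstar ψ := by
  classical
  set R := {p : 𝕄 × (Fin N × S) // IsRecoverable b jstar Sstar p}
  let e : R → {m0 : 𝕄 // b m0 ≠ 0} × {s : S // s ∈ Sstar} :=
    fun p => (⟨p.1.1, p.2.1⟩, ⟨p.1.2.2, p.2.2.2⟩)
  have hcol (p : R) : emissionCol W p.1 = fun z => W z p.1.1 (jstar, p.1.2.2) := by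
    unfold emissionCol
    rw [show p.1.2 = (jstar, p.1.2.2) from Prod.ext p.2.2.1 rfl]
  have he : Function.Injective e := fun p p' h => by
    simp only [e, Prod.mk.injEq, Subtype.mk.injEq] at h
    exact Subtype.ext (Prod.ext h.1 (Prod.ext (p.2.2.1.trans p'.2.2.1.symm) h.2))
  have hc : LinearIndependent ℝ fun p : R => emissionCol W p.1 := by
    convert hli.comp e he using 1
    exact funext hcol
  have hrange : Set.range (fun p : R => emissionCol W p.1) ⊆ {f : X → ℝ | ∃ m0 : 𝕄, ∃ s : S,
      b m0 ≠ 0 ∧ s ∈ Sstar ∧ f = fun z => W z m0 (jstar, s)} := by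
    rintro _ ⟨p, rfl⟩
    exact ⟨p.1.1, p.1.2.2, p.2.1, p.2.2.2, hcol p⟩
  obtain ⟨ψ, hψc, hψU⟩ := exists_dual_of_linearIndependent hc
    (eq_bot_iff.2 (hspan ▸ inf_le_inf_right _ (Submodule.span_mono hrange)))
  refine ⟨fun p => if hp : IsRecoverable b jstar Sstar p then ψ ⟨p, hp⟩ else 0,
    fun v hv p => ?_⟩
  by_cases hp : IsRecoverable b jstar Sstar p
  · simp only [dif_pos hp, if_pos hp, map_sum, map_smul, smul_eq_mul]
    refine (Finset.sum_eq_single p (fun p' _ hne => ?_) (by simp)).trans ?_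
    · by_cases hp' : IsRecoverable b jstar Sstar p'
      · rw [hψc ⟨p, hp⟩ ⟨p', hp'⟩, if_neg fun h => hne (congrArg Subtype.val h), mul_zero]
      · by_cases hu : p'.2.1 = jstar ∧ b p'.1 = 0
        · simp [hv p' hu.1 hu.2]
        · rw [hψU ⟨p, hp⟩ _ (Submodule.subset_span ?_), mul_zero]
          obtain ⟨m, j, s⟩ := p'
          by_cases hj : j = jstar
          · subst hj
            have hb : b m ≠ 0 := fun h => hu ⟨rfl, h⟩
            exact .inl ⟨m, s, hb, fun hs => hp' ⟨hb, rfl, hs⟩, rfl⟩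
          · exact .inr ⟨m, j, s, hj, rfl⟩
    · simp [hψc ⟨p, hp⟩ ⟨p, hp⟩]
  · simp [hp]

end Recovery

section WeightedLikelihood

variable {𝕄 S X : Type*} {N T : ℕ} [Fintype 𝕄] [Fintype S] {pM : (Fin N → 𝕄) → ℝ}
  {A : Matrix (Fin N × S) (Fin N × S) ℝ} {μ : Fin N × S → ℝ}
  {W : X → 𝕄 → Fin N × S → ℝ} (b : 𝕄 → ℝ) (jstar : Fin N)

/-- `P(X = x) · E[b (M j*) | X = x]`. -/
def weightedSeqP (pM : (Fin N → 𝕄) → ℝ) (A : Matrix (Fin N × S) (Fin N × S) ℝ)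
    (μ : Fin N × S → ℝ) (W : X → 𝕄 → Fin N × S → ℝ) (b : 𝕄 → ℝ) (jstar : Fin N)
    (x : Fin T → X) : ℝ :=
  ∑ m, pM m * (b (m jstar) * mSeqPm A μ W m x)

theorem sum_mul_mMemPost [DecidableEq 𝕄] (x : Fin T → X) :
    ∑ m0, b m0 * mMemPost pM A μ W jstar x m0
      = weightedSeqP pM A μ W b jstar x / mSeqP pM A μ W x := by
  simp only [mMemPost, weightedSeqP, mul_div_assoc', ← Finset.sum_div, Finset.mul_sum, mul_ite,
    mul_zero]
  rw [Finset.sum_comm]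
  simp only [Finset.sum_ite_eq, Finset.mem_univ, if_true]
  congr 1
  exact Finset.sum_congr rfl fun m _ => by ring

theorem weightedSeqP_eq (hstat : A *ᵥ μ = μ) (x : Fin T → X) :
    weightedSeqP pM A μ W b jstar x
      = ∑ m, b (m jstar) * (pM m * hatSeqPm A μ W b jstar m x) := by
  refine Finset.sum_congr rfl fun m _ => ?_
  rw [hatSeqPm_eq b jstar hstat]
  conv_lhs => rw [← mul_promptV b jstar m]
  ring

end WeightedLikelihood

section PromptedPosterior

variable {𝕄 S X : Type*} {N T : ℕ} [Fintype 𝕄] [Fintype S] [DecidableEq 𝕄]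
  [DecidableEq S] (pM : (Fin N → 𝕄) → ℝ) (A : Matrix (Fin N × S) (Fin N × S) ℝ)
  (μ : Fin N × S → ℝ) (W : X → 𝕄 → Fin N × S → ℝ) (b : 𝕄 → ℝ) (jstar : Fin N)

/-- `hatCellJoint … x i (m₀, g) = P(M_{g.1} = m₀, H_i = g, X̂_{-i} = x̂_{-i})`, the numerator of
`v_i`. -/
def hatCellJoint (x : Fin T → X) (i : Fin (T + 1)) (p : 𝕄 × (Fin N × S)) : ℝ :=
  ∑ m, if m p.2.1 = p.1 then pM m * hatJointAt A μ W b jstar m x i p.2 else 0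

theorem hatZ_eq_sum_hatCellJoint (x : Fin T → X) (i : Fin (T + 1)) :
    hatZ pM A μ W b jstar x i = ∑ p, hatCellJoint pM A μ W b jstar x i p := by
  have := sum_prod_mul_sum_ite_eq (fun m (g : Fin N × S) => m g.1) (fun _ _ => (1 : ℝ))
    (fun m g => pM m * hatJointAt A μ W b jstar m x i g)
  simp only [one_mul] at this
  simp only [hatZ, hatCellJoint, Finset.mul_sum]
  exact this.symm

theorem hatGvec_eq_sum [Fintype X] (x : Fin T → X) (i : Fin (T + 1)) :
    hatGvec pM A μ W b jstar x i
      = ∑ p, (hatCellJoint pM A μ W b jstar x i p / hatZ pM A μ W b jstar x i)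
          • emissionCol W p := by
  ext z
  simp only [hatGvec, hatCellJoint, emissionCol, Finset.sum_apply, Pi.smul_apply, smul_eq_mul,
    mul_comm]

variable {pM A μ W}

theorem hatCellJoint_nonneg (h : IsNonnegHMM pM A μ W) (x : Fin T → X) (i : Fin (T + 1))
    (p : 𝕄 × (Fin N × S)) :
    0 ≤ hatCellJoint pM A μ W b jstar x i p :=
  Finset.sum_nonneg fun m _ => by
    split_ifs
    · exact mul_nonneg (h.pM_nonneg m)
        (hatJointAt_nonneg b jstar h.A_nonneg h.μ_nonneg h.W_nonneg m x i p.2)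
    · exact le_rfl

theorem hatZ_nonneg (h : IsNonnegHMM pM A μ W) (x : Fin T → X) (i : Fin (T + 1)) :
    0 ≤ hatZ pM A μ W b jstar x i := by
  rw [hatZ_eq_sum_hatCellJoint]
  exact Finset.sum_nonneg fun p _ => hatCellJoint_nonneg b jstar h x i p

theorem mul_hatJointAt_eq_zero (h : IsNonnegHMM pM A μ W) (x : Fin T → X) (i : Fin (T + 1))
    (m : Fin N → 𝕄) (g : Fin N × S)
    (hcell : hatCellJoint pM A μ W b jstar x i (m g.1, g) = 0) :
    pM m * hatJointAt A μ W b jstar m x i g = 0 := by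
  have hterm := (Finset.sum_eq_zero_iff_of_nonneg fun m' _ => ?_).1 hcell m (Finset.mem_univ m)
  · simpa using hterm
  · split_ifs
    · exact mul_nonneg (h.pM_nonneg m')
        (hatJointAt_nonneg b jstar h.A_nonneg h.μ_nonneg h.W_nonneg m' x i g)
    · exact le_rfl

theorem mul_hatSeqPm_eq_zero (h : IsNonnegHMM pM A μ W) (x : Fin T → X) {i : Fin (T + 1)}
    (hZ : ¬ 0 < hatZ pM A μ W b jstar x i) (m : Fin N → 𝕄) :
    pM m * hatSeqPm A μ W b jstar m x = 0 := by
  have hJ := hatJointAt_nonneg b jstar h.A_nonneg h.μ_nonneg h.W_nonneg m x i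
  have hm := (Finset.sum_eq_zero_iff_of_nonneg fun m _ => mul_nonneg (h.pM_nonneg m)
      (Finset.sum_nonneg fun g _ => hatJointAt_nonneg b jstar h.A_nonneg h.μ_nonneg
        h.W_nonneg m x i g)).1
    (le_antisymm (not_lt.1 hZ) (hatZ_nonneg b jstar h x i)) m (Finset.mem_univ m)
  rcases mul_eq_zero.1 hm with hpm | hsum
  · rw [hpm, zero_mul]
  · rw [← sum_hatEm_mul_hatJointAt b jstar m x i, Finset.sum_eq_zero fun g _ => by
      rw [(Finset.sum_eq_zero_iff_of_nonneg fun g _ => hJ g).1 hsum g (Finset.mem_univ g),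
        mul_zero], mul_zero]

theorem hatCellJoint_succ_eq_zero (hstat : A *ᵥ μ = μ) (x : Fin T → X) (j : Fin T)
    {p : 𝕄 × (Fin N × S)} (hj : p.2.1 = jstar) (hb : b p.1 = 0) :
    hatCellJoint pM A μ W b jstar x j.succ p = 0 := by
  refine Finset.sum_eq_zero fun m _ => ?_
  split_ifs with hm
  · rw [hatJointAt_succ b jstar hstat, promptV_eq_zero b jstar (by rw [← hj, hm, hb]),
      zero_mul, mul_zero]
  · rfl

theorem weightedSeqP_eq_zero (h : IsNonnegHMM pM A μ W) (hstat : A *ᵥ μ = μ) (x : Fin T → X)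
    {i : Fin (T + 1)} (hZ : ¬ 0 < hatZ pM A μ W b jstar x i) :
    weightedSeqP pM A μ W b jstar x = 0 := by
  rw [weightedSeqP_eq b jstar hstat]
  exact Finset.sum_eq_zero fun m _ => by rw [mul_hatSeqPm_eq_zero b jstar h x hZ m, mul_zero]

theorem hatCellJoint_succ_eq_zero_of_mPostH (h : IsNonnegHMM pM A μ W) (hstat : A *ᵥ μ = μ)
    (Sstar : Finset S) (x : Fin T → X) (j : Fin T)
    (hpost : ∀ g : Fin N × S, ¬(g.1 = jstar ∧ g.2 ∈ Sstar) → mPostH pM A μ W x j g = 0)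
    {p : 𝕄 × (Fin N × S)} (hp : ¬ IsRecoverable b jstar Sstar p) :
    hatCellJoint pM A μ W b jstar x j.succ p = 0 := by
  by_cases hH : p.2.1 = jstar ∧ p.2.2 ∈ Sstar
  · exact hatCellJoint_succ_eq_zero b jstar hstat x j hH.1 (not_not.1 fun hb => hp ⟨hb, hH⟩)
  have hterm : ∀ m, 0 ≤ pM m * mJointAt A μ W m x j p.2 := fun m =>
    mul_nonneg (h.pM_nonneg m) (mJointAt_nonneg h.A_nonneg h.μ_nonneg h.W_nonneg m x j p.2)
  have hZ : mZ pM A μ W x j = ∑ g, ∑ m, pM m * mJointAt A μ W m x j g := by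
    simp only [mZ, Finset.mul_sum]
    exact Finset.sum_comm
  have hmass : ∑ m, pM m * mJointAt A μ W m x j p.2 = 0 := by
    refine eq_zero_of_div_sum_eq_zero (fun g => Finset.sum_nonneg fun m _ => mul_nonneg
      (h.pM_nonneg m) (mJointAt_nonneg h.A_nonneg h.μ_nonneg h.W_nonneg m x j g)) ?_
    rw [← hZ]
    exact hpost p.2 hH
  refine Finset.sum_eq_zero fun m _ => ?_
  split_ifs
  · rw [hatJointAt_succ b jstar hstat, mul_left_comm,
      (Finset.sum_eq_zero_iff_of_nonneg fun m _ => hterm m).1 hmass m (Finset.mem_univ m),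
      mul_zero]
  · rfl

variable [Fintype X]

theorem hatGtot_eq_sum (h : IsNonnegHMM pM A μ W) (x : Fin T → X) (i : Fin (T + 1)) :
    hatGtot pM A μ W b jstar x i
      = ∑ p, (hatCellJoint pM A μ W b jstar x i p / hatZ pM A μ W b jstar x i)
          • emissionCol W p := by
  unfold hatGtot
  split_ifs with hZ
  · exact hatGvec_eq_sum pM A μ W b jstar x i
  · have hZ0 := le_antisymm (not_lt.1 hZ) (hatZ_nonneg b jstar h x i)
    ext z
    simp [hZ0]

theorem apply_hatGtot_le (h : IsNonnegHMM pM A μ W) (L : Module.Dual ℝ (X → ℝ))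
    (x : Fin T → X) (i : Fin (T + 1)) :
    L (hatGtot pM A μ W b jstar x i) ≤ ∑ p, |L (emissionCol W p)| := by
  have hcell := hatCellJoint_nonneg b jstar h x i
  rw [hatGtot_eq_sum b jstar h, hatZ_eq_sum_hatCellJoint]
  exact apply_sum_smul_le_sum_abs L _ _ (fun p => div_nonneg (hcell p)
    (Finset.sum_nonneg fun p _ => hcell p)) (div_sum_le_one hcell)

end PromptedPosterior

section AttentionReadout

variable {𝕄 S X : Type*} {N T : ℕ} [Fintype 𝕄] [Fintype S] [Fintype X] [DecidableEq 𝕄]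
  [DecidableEq S] {pM : (Fin N → 𝕄) → ℝ} {A : Matrix (Fin N × S) (Fin N × S) ℝ}
  {μ : Fin N × S → ℝ} {W : X → 𝕄 → Fin N × S → ℝ} (b : 𝕄 → ℝ) (jstar : Fin N)
  (Sstar : Finset S) {ψ : 𝕄 × (Fin N × S) → Module.Dual ℝ (X → ℝ)}

theorem apply_hatGtot_succ (h : IsNonnegHMM pM A μ W) (hstat : A *ᵥ μ = μ)
    (hψ : IsRecoveryFamily W b jstar Sstar ψ) (x : Fin T → X) (j : Fin T)
    (p : 𝕄 × (Fin N × S)) :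
    ψ p (hatGtot pM A μ W b jstar x j.succ)
      = if IsRecoverable b jstar Sstar p then
          hatCellJoint pM A μ W b jstar x j.succ p / hatZ pM A μ W b jstar x j.succ
        else 0 := by
  rw [hatGtot_eq_sum b jstar h]
  refine hψ _ (fun p hj hb => ?_) p
  rw [hatCellJoint_succ_eq_zero b jstar hstat x j hj hb, zero_div]

/-- The score `qᵀ (Θᴷ Ĝ_i + β_i)` for the key `φ = ∑_p ψ_p`. As `φ (Ĝ_i)` never exceeds
`∑_p |φ (W_{:,p})|`, the offset keeps the prompt position below every other one. -/
def attnScore (pM : (Fin N → 𝕄) → ℝ) (A : Matrix (Fin N × S) (Fin N × S) ℝ)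
    (μ : Fin N × S → ℝ) (W : X → 𝕄 → Fin N × S → ℝ) (b : 𝕄 → ℝ) (jstar : Fin N)
    (ψ : 𝕄 × (Fin N × S) → Module.Dual ℝ (X → ℝ)) (x : Fin T → X) (i : Fin (T + 1)) : ℝ :=
  (∑ p, ψ p) (hatGtot pM A μ W b jstar x i)
    + if i = 0 then -(∑ p, |(∑ p', ψ p') (emissionCol W p)| + 2) else 0

theorem attnScore_zero_le (h : IsNonnegHMM pM A μ W) (x : Fin T → X) :
    attnScore pM A μ W b jstar ψ x 0 ≤ -2 := by
  have := apply_hatGtot_le b jstar h (∑ p, ψ p) x 0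
  simp only [attnScore, if_true]
  linarith

theorem attnScore_succ (h : IsNonnegHMM pM A μ W) (hstat : A *ᵥ μ = μ)
    (hψ : IsRecoveryFamily W b jstar Sstar ψ) (x : Fin T → X) (j : Fin T) :
    attnScore pM A μ W b jstar ψ x j.succ
      = (∑ p, if IsRecoverable b jstar Sstar p then hatCellJoint pM A μ W b jstar x j.succ p
          else 0) / ∑ p, hatCellJoint pM A μ W b jstar x j.succ p := by
  simp only [attnScore, if_neg (Fin.succ_ne_zero j), add_zero, LinearMap.sum_apply,
    apply_hatGtot_succ b jstar Sstar h hstat hψ, Finset.sum_div, ite_div, zero_div,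
    hatZ_eq_sum_hatCellJoint]

theorem attnScore_succ_eq_one (h : IsNonnegHMM pM A μ W) (hstat : A *ᵥ μ = μ)
    (hψ : IsRecoveryFamily W b jstar Sstar ψ) (x : Fin T → X) (j : Fin T)
    (hpost : ∀ g : Fin N × S, ¬(g.1 = jstar ∧ g.2 ∈ Sstar) → mPostH pM A μ W x j g = 0)
    (hZ : 0 < hatZ pM A μ W b jstar x j.succ) :
    attnScore pM A μ W b jstar ψ x j.succ = 1 := by
  rw [attnScore_succ b jstar Sstar h hstat hψ]
  exact sum_ite_div_sum_eq_one _
    (fun p hp => hatCellJoint_succ_eq_zero_of_mPostH b jstar h hstat Sstar x j hpost hp)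
    (hatZ_eq_sum_hatCellJoint pM A μ W b jstar x _ ▸ hZ)

theorem value_succ_eq (h : IsNonnegHMM pM A μ W) (hstat : A *ᵥ μ = μ)
    (hψ : IsRecoveryFamily W b jstar Sstar ψ) (x : Fin T → X) (j : Fin T)
    (hsupp : ∀ m g, ¬ IsRecoverable b jstar Sstar (m g.1, g) →
      pM m * (W (x j) (m g.1) g * hatJointAt A μ W b jstar m x j.succ g) = 0) :
    ∑ p, b p.1 * (ψ p (hatGtot pM A μ W b jstar x j.succ) * mEvec W b jstar x j.succ p)
      = weightedSeqP pM A μ W b jstar x / hatZ pM A μ W b jstar x j.succ := by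
  calc _ = (∑ p, (if IsRecoverable b jstar Sstar p then b p.1 * W (x j) p.1 p.2 else 0)
          * hatCellJoint pM A μ W b jstar x j.succ p) / hatZ pM A μ W b jstar x j.succ := by
        rw [Finset.sum_div]
        refine Finset.sum_congr rfl fun p _ => ?_
        rw [apply_hatGtot_succ b jstar Sstar h hstat hψ, mEvec_succ]
        split_ifs <;> ring
    _ = (∑ m, ∑ g, b (m jstar) * (pM m * (W (x j) (m g.1) g
          * hatJointAt A μ W b jstar m x j.succ g))) / hatZ pM A μ W b jstar x j.succ := by
        congr 1
        refine (sum_prod_mul_sum_ite_eq (fun m (g : Fin N × S) => m g.1)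
          (fun a g => if IsRecoverable b jstar Sstar (a, g) then b a * W (x j) a g else 0)
          (fun m g => pM m * hatJointAt A μ W b jstar m x j.succ g)).trans
          (Finset.sum_congr rfl fun m _ => Finset.sum_congr rfl fun g _ => ?_)
        split_ifs with hrec
        · rw [show m g.1 = m jstar from congrArg m hrec.2.1]
          ring
        · rw [zero_mul, hsupp m g hrec, mul_zero]
    _ = weightedSeqP pM A μ W b jstar x / hatZ pM A μ W b jstar x j.succ := by
        rw [weightedSeqP_eq b jstar hstat]
        congr 1
        refine Finset.sum_congr rfl fun m _ => ?_
        rw [← sum_hatEm_mul_hatJointAt b jstar m x j.succ, hatEm_succ, Finset.mul_sum,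
          Finset.mul_sum]

variable {x : Fin T → X} {i₁ : Fin T}

theorem value_eq_of_isMax (h : IsNonnegHMM pM A μ W) (hstat : A *ᵥ μ = μ)
    (hψ : IsRecoveryFamily W b jstar Sstar ψ)
    (hpost : ∀ g : Fin N × S, ¬(g.1 = jstar ∧ g.2 ∈ Sstar) → mPostH pM A μ W x i₁ g = 0)
    {i : Fin (T + 1)}
    (hi : ∀ i', attnScore pM A μ W b jstar ψ x i' ≤ attnScore pM A μ W b jstar ψ x i) :
    ∑ p, b p.1 * (ψ p (hatGtot pM A μ W b jstar x i) * mEvec W b jstar x i p)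
      = weightedSeqP pM A μ W b jstar x / hatZ pM A μ W b jstar x i := by
  have hcell := hatCellJoint_nonneg b jstar h x
  have hscore := hi i₁.succ
  obtain ⟨j, rfl⟩ : ∃ j : Fin T, i = j.succ := by
    refine (Fin.eq_zero_or_eq_succ i).resolve_left fun h0 => ?_
    rw [h0, attnScore_succ b jstar Sstar h hstat hψ] at hscore
    have := sum_ite_div_sum_nonneg (IsRecoverable b jstar Sstar) (hcell i₁.succ)
    linarith [attnScore_zero_le (ψ := ψ) b jstar h x]
  refine value_succ_eq b jstar Sstar h hstat hψ x j fun m g hg => ?_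
  by_cases hZ : 0 < hatZ pM A μ W b jstar x i₁.succ
  · -- the score at `i₁ + 1` is `1`, the largest possible, so the score at `j + 1` is `1` too
    rw [attnScore_succ_eq_one b jstar Sstar h hstat hψ x i₁ hpost hZ,
      attnScore_succ b jstar Sstar h hstat hψ] at hscore
    rw [mul_left_comm, mul_hatJointAt_eq_zero b jstar h x j.succ m g
      (eq_zero_of_one_le_sum_ite_div_sum _ (hcell j.succ) hscore hg), mul_zero]
  · simpa [hatEm_succ] using mul_hatEm_mul_hatJointAt_eq_zero b jstar h x
      (mul_hatSeqPm_eq_zero b jstar h x hZ m) j.succ g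

theorem exists_isMax_hatZ_pos (h : IsNonnegHMM pM A μ W) (hstat : A *ᵥ μ = μ)
    (hψ : IsRecoveryFamily W b jstar Sstar ψ)
    (hpost : ∀ g : Fin N × S, ¬(g.1 = jstar ∧ g.2 ∈ Sstar) → mPostH pM A μ W x i₁ g = 0)
    (hD : weightedSeqP pM A μ W b jstar x ≠ 0) :
    ∃ i, (∀ i', attnScore pM A μ W b jstar ψ x i' ≤ attnScore pM A μ W b jstar ψ x i)
      ∧ 0 < hatZ pM A μ W b jstar x i := by
  have hZ : 0 < hatZ pM A μ W b jstar x i₁.succ :=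
    not_not.1 fun hZ => hD (weightedSeqP_eq_zero b jstar h hstat x hZ)
  refine ⟨i₁.succ, fun i' => ?_, hZ⟩
  rw [attnScore_succ_eq_one b jstar Sstar h hstat hψ x i₁ hpost hZ]
  rcases Fin.eq_zero_or_eq_succ i' with rfl | ⟨j, rfl⟩
  · linarith [attnScore_zero_le (ψ := ψ) b jstar h x]
  · rw [attnScore_succ b jstar Sstar h hstat hψ]
    exact sum_ite_div_sum_le_one _ (hatCellJoint_nonneg b jstar h x j.succ)

end AttentionReadout

theorem stmt19_general {𝕄 S X : Type*} {N : ℕ}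
    [Fintype 𝕄] [Fintype S] [Fintype X] [DecidableEq 𝕄] [DecidableEq S]
    (pM : (Fin N → 𝕄) → ℝ) (μ : Fin N × S → ℝ)
    (A : Matrix (Fin N × S) (Fin N × S) ℝ) (W : X → 𝕄 → Fin N × S → ℝ)
    (hpM0 : ∀ m, 0 ≤ pM m)
    (hμ0 : ∀ g, 0 ≤ μ g)
    (hA0 : ∀ g g', 0 ≤ A g' g)
    (hW0 : ∀ z m0 g, 0 ≤ W z m0 g)
    (b : 𝕄 → ℝ) (jstar : Fin N)
    -- relaxed multi-memory non-degeneracy with `𝕄* = supp(b)`, `H* = {j*} × S*`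
    (Sstar : Finset S)
    (hli : LinearIndependent ℝ
      (fun p : {m0 : 𝕄 // b m0 ≠ 0} × {s : S // s ∈ Sstar} =>
        fun z : X => W z p.1.1 (jstar, p.2.1)))
    (hspan : Submodule.span ℝ
        {f : X → ℝ | ∃ m0 : 𝕄, ∃ s : S,
          b m0 ≠ 0 ∧ s ∈ Sstar ∧ f = fun z => W z m0 (jstar, s)}
      ⊓ Submodule.span ℝ
        {f : X → ℝ |
          (∃ m0 : 𝕄, ∃ s : S,
            b m0 ≠ 0 ∧ s ∉ Sstar ∧ f = fun z => W z m0 (jstar, s))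
          ∨ (∃ m0 : 𝕄, ∃ j : Fin N, ∃ s : S,
            j ≠ jstar ∧ f = fun z => W z m0 (j, s))}
      = ⊥)
    -- stationarity: ergodic chain, full support, `P(H_0) = A P(H_0)`
    (hstat : A.mulVec μ = μ)
    (T : ℕ) :
    ∃ (ΘK : Matrix (Option (Fin N × S)) X ℝ) (q : Option (Fin N × S) → ℝ)
      (β : Fin (T + 1) → Option (Fin N × S) → ℝ)
      (ΘV : Matrix (𝕄 × (Fin N × S)) X ℝ) (u : 𝕄 × (Fin N × S) → ℝ),
      ∀ x : Fin T → X,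
        -- `x ∈ R`
        0 < mSeqP pM A μ W x →
        (∃ i : Fin T, ∀ g : Fin N × S,
          ¬(g.1 = jstar ∧ g.2 ∈ Sstar) → mPostH pM A μ W x i g = 0) →
        (0 ≤ ∑ m0, b m0 * mMemPost pM A μ W jstar x m0
          ↔ 0 ≤
            ((Finset.univ.filter fun i : Fin (T + 1) => ∀ i' : Fin (T + 1),
                q ⬝ᵥ (ΘK.mulVec (hatGtot pM A μ W b jstar x i') + β i')
                  ≤ q ⬝ᵥ (ΘK.mulVec (hatGtot pM A μ W b jstar x i) + β i)).card : ℝ)⁻¹ *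
              ∑ i ∈ Finset.univ.filter (fun i : Fin (T + 1) => ∀ i' : Fin (T + 1),
                  q ⬝ᵥ (ΘK.mulVec (hatGtot pM A μ W b jstar x i') + β i')
                    ≤ q ⬝ᵥ (ΘK.mulVec (hatGtot pM A μ W b jstar x i) + β i)),
                ∑ p : 𝕄 × (Fin N × S), u p *
                  ((ΘV.mulVec (hatGtot pM A μ W b jstar x i)) p *
                    mEvec W b jstar x i p)) := by
  have h : IsNonnegHMM pM A μ W := ⟨hpM0, hA0, hμ0, hW0⟩
  obtain ⟨ψ, hψ⟩ := exists_recoveryFunctionals W b jstar Sstar hli hspan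
  refine ⟨LinearMap.toMatrix' (LinearMap.pi fun _ => ∑ p, ψ p), Pi.single none 1,
    fun i _ => if i = 0 then -(∑ p, |(∑ p', ψ p') (emissionCol W p)| + 2) else 0,
    LinearMap.toMatrix' (LinearMap.pi ψ), fun p => b p.1, fun x hx ⟨i₁, hpost⟩ => ?_⟩
  simp only [single_dotProduct, one_mul, Pi.add_apply, LinearMap.toMatrix'_mulVec,
    LinearMap.pi_apply]
  rw [sum_mul_mMemPost]
  refine nonneg_div_iff_nonneg_average _ hx _ _ (fun i _ => hatZ_nonneg b jstar h x i)
    (fun i hi => value_eq_of_isMax b jstar Sstar h hstat hψ hpost (Finset.mem_filter.1 hi).2)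
    fun hD => ?_
  obtain ⟨i, hi, hZ⟩ := exists_isMax_hatZ_pos b jstar Sstar h hstat hψ hpost hD
  exact ⟨i, Finset.mem_filter.2 ⟨Finset.mem_univ i, hi⟩, hZ⟩

theorem stmt19 {𝕄 S X : Type*} {N : ℕ}
    [Fintype 𝕄] [Fintype S] [Fintype X] [DecidableEq 𝕄] [DecidableEq S]
    (pM : (Fin N → 𝕄) → ℝ) (μ : Fin N × S → ℝ)
    (A : Matrix (Fin N × S) (Fin N × S) ℝ) (W : X → 𝕄 → Fin N × S → ℝ)
    (hpM0 : ∀ m, 0 ≤ pM m) (hpM1 : ∑ m, pM m = 1)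
    (hμ0 : ∀ g, 0 ≤ μ g) (hμ1 : ∑ g, μ g = 1)
    (hA0 : ∀ g g', 0 ≤ A g' g) (hA1 : ∀ g, ∑ g', A g' g = 1)
    (hW0 : ∀ z m0 g, 0 ≤ W z m0 g) (hW1 : ∀ m0 g, ∑ z, W z m0 g = 1)
    (b : 𝕄 → ℝ) (jstar : Fin N)
    -- relaxed multi-memory non-degeneracy with `𝕄* = supp(b)`, `H* = {j*} × S*`
    (Sstar : Finset S)
    (hli : LinearIndependent ℝ
      (fun p : {m0 : 𝕄 // b m0 ≠ 0} × {s : S // s ∈ Sstar} =>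
        fun z : X => W z p.1.1 (jstar, p.2.1)))
    (hspan : Submodule.span ℝ
        {f : X → ℝ | ∃ m0 : 𝕄, ∃ s : S,
          b m0 ≠ 0 ∧ s ∈ Sstar ∧ f = fun z => W z m0 (jstar, s)}
      ⊓ Submodule.span ℝ
        {f : X → ℝ |
          (∃ m0 : 𝕄, ∃ s : S,
            b m0 ≠ 0 ∧ s ∉ Sstar ∧ f = fun z => W z m0 (jstar, s))
          ∨ (∃ m0 : 𝕄, ∃ j : Fin N, ∃ s : S,
            j ≠ jstar ∧ f = fun z => W z m0 (j, s))}
      = ⊥)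
    -- stationarity: ergodic chain, full support, `P(H_0) = A P(H_0)`
    (hErg : ∃ n₀ : ℕ, ∀ n ≥ n₀, ∀ g g' : Fin N × S, 0 < (A ^ n) g' g)
    (hfull : ∀ g, 0 < μ g)
    (hstat : A.mulVec μ = μ)
    (T : ℕ) :
    ∃ (ΘK : Matrix (Option (Fin N × S)) X ℝ) (q : Option (Fin N × S) → ℝ)
      (β : Fin (T + 1) → Option (Fin N × S) → ℝ)
      (ΘV : Matrix (𝕄 × (Fin N × S)) X ℝ) (u : 𝕄 × (Fin N × S) → ℝ),
      ∀ x : Fin T → X,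
        -- `x ∈ R`
        0 < mSeqP pM A μ W x →
        (∃ i : Fin T, ∀ g : Fin N × S,
          ¬(g.1 = jstar ∧ g.2 ∈ Sstar) → mPostH pM A μ W x i g = 0) →
        (0 ≤ ∑ m0, b m0 * mMemPost pM A μ W jstar x m0
          ↔ 0 ≤
            ((Finset.univ.filter fun i : Fin (T + 1) => ∀ i' : Fin (T + 1),
                q ⬝ᵥ (ΘK.mulVec (hatGtot pM A μ W b jstar x i') + β i')
                  ≤ q ⬝ᵥ (ΘK.mulVec (hatGtot pM A μ W b jstar x i) + β i)).card : ℝ)⁻¹ *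
              ∑ i ∈ Finset.univ.filter (fun i : Fin (T + 1) => ∀ i' : Fin (T + 1),
                  q ⬝ᵥ (ΘK.mulVec (hatGtot pM A μ W b jstar x i') + β i')
                    ≤ q ⬝ᵥ (ΘK.mulVec (hatGtot pM A μ W b jstar x i) + β i)),
                ∑ p : 𝕄 × (Fin N × S), u p *
                  ((ΘV.mulVec (hatGtot pM A μ W b jstar x i)) p *
                    mEvec W b jstar x i p)) :=
  stmt19_general pM μ A W hpM0 hμ0 hA0 hW0 b jstar Sstar hli hspan hstat T

end
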